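/- Consider the cubic u(t) = β₃t³ + β₂t² + β₁t + β₀ on [0, t₁] with t₁ > 0, satisfying u(0) = u₀, u(t₁) = u₁ with κ := (u₁ − u₀)/t₁ > 0, u'(0) = u₀', and inflection at t₁ (u''(t₁) = 0). If 0 ≤ u₀' < κ, then u''(t) > 0 for all t ∈ (0, t₁) and u'(t₁) > 0. -/

import Mathlib

/-!
The three conditions `u(0) = u₀`, `u'(0) = u₀'`, `u''(t₁) = 0` together with the chord slope `κ`
pin the cubic down: `β₂ = -3 β₃ t₁` and `2 β₃ t₁² = u₀' - κ`. Hence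
`u''(t) = 6 β₃ (t - t₁)` is positive on `(0, t₁)` exactly because `β₃ < 0`, i.e. `u₀' < κ`,
and `u'(t₁) = (3κ - u₀')/2 = κ + (κ - u₀')/2 > 0`.
-/

lemma deriv_cubic (a b c d : ℝ) :
    deriv (fun t : ℝ => a * t ^ 3 + b * t ^ 2 + c * t + d)
      = fun t => 3 * a * t ^ 2 + 2 * b * t + c := by
  funext t
  refine HasDerivAt.deriv ?_
  refine ((((hasDerivAt_pow 3 t).const_mul a).add ((hasDerivAt_pow 2 t).const_mul b)).add
    ((hasDerivAt_id t).const_mul c)).add_const d |>.congr_deriv ?_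
  norm_num
  ring

lemma deriv_quadratic (a b c : ℝ) :
    deriv (fun t : ℝ => a * t ^ 2 + b * t + c) = fun t => 2 * a * t + b := by
  funext t
  refine HasDerivAt.deriv ?_
  refine (((hasDerivAt_pow 2 t).const_mul a).add ((hasDerivAt_id t).const_mul b)).add_const c
    |>.congr_deriv ?_
  norm_num
  ring

lemma cubic_coeffs_of_chord_of_inflection {β₁ β₂ β₃ t₁ κ : ℝ} (ht₁ : t₁ ≠ 0)
    (hchord : β₃ * t₁ ^ 3 + β₂ * t₁ ^ 2 + β₁ * t₁ = κ * t₁)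
    (hinfl : 6 * β₃ * t₁ + 2 * β₂ = 0) :
    β₂ = -3 * β₃ * t₁ ∧ 2 * β₃ * t₁ ^ 2 = β₁ - κ := by
  have hβ₂ : β₂ = -3 * β₃ * t₁ := by linarith
  refine ⟨hβ₂, mul_right_cancel₀ ht₁ ?_⟩
  linear_combination (-1 : ℝ) * hchord + t₁ ^ 2 * hβ₂

theorem stmt_9_general (β₀ β₁ β₂ β₃ t₁ u₀ u₁ u₀' κ : ℝ)
    (ht₁ : 0 < t₁)
    (u : ℝ → ℝ) (hu : u = fun t => β₃ * t ^ 3 + β₂ * t ^ 2 + β₁ * t + β₀)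
    (h0 : u 0 = u₀) (h1 : u t₁ = u₁)
    (hκ : κ = (u₁ - u₀) / t₁) (hκpos : 0 < κ)
    (hd0 : deriv u 0 = u₀')
    (hinfl : deriv (deriv u) t₁ = 0)
    (hhi : u₀' < κ) :
    (∀ t ∈ Set.Ioo 0 t₁, 0 < deriv (deriv u) t) ∧ 0 < deriv u t₁ := by
  have hu' : deriv u = fun t => 3 * β₃ * t ^ 2 + 2 * β₂ * t + β₁ := hu ▸ deriv_cubic β₃ β₂ β₁ β₀
  have hu'' : deriv (deriv u) = fun t => 2 * (3 * β₃) * t + 2 * β₂ :=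
    hu' ▸ deriv_quadratic (3 * β₃) (2 * β₂) β₁
  rw [hu''] at hinfl ⊢
  rw [hu'] at hd0 ⊢
  rw [hu] at h0 h1
  simp only at h0 h1 hd0 hinfl ⊢
  have hchord : β₃ * t₁ ^ 3 + β₂ * t₁ ^ 2 + β₁ * t₁ = κ * t₁ := by
    rw [hκ, div_mul_cancel₀ _ ht₁.ne', ← h0, ← h1]
    ring
  obtain ⟨hβ₂, hβ₃⟩ := cubic_coeffs_of_chord_of_inflection ht₁.ne' hchord (by linarith)
  have hβ₁ : β₁ = u₀' := by simpa using hd0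
  have hβ₃_neg : β₃ < 0 := by
    have : β₃ * t₁ ^ 2 < 0 := by linarith
    exact neg_of_mul_neg_left this (by positivity)
  refine ⟨fun t ht => ?_, ?_⟩
  · have hfactor : 2 * (3 * β₃) * t + 2 * β₂ = 6 * β₃ * (t - t₁) := by rw [hβ₂]; ring
    rw [hfactor]
    exact mul_pos_of_neg_of_neg (by linarith) (by linarith [ht.2])
  · rw [hβ₂]
    linarith

/-- Case 2.1 of the `C⁰` trajectory predictor proof (motif `s₊₊ᵦ` ending in an
inflection point): a cubic on `[0,t₁]` with `u(0) = u₀`, `u(t₁) = u₁`,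
`κ = (u₁ − u₀)/t₁ > 0`, `u'(0) = u₀'`, `u''(t₁) = 0`, and `0 ≤ u₀' < κ`
is strictly convex on `(0,t₁)` and has positive derivative at `t₁`. -/
theorem stmt_9 (β₀ β₁ β₂ β₃ t₁ u₀ u₁ u₀' κ : ℝ)
    (ht₁ : 0 < t₁)
    (u : ℝ → ℝ) (hu : u = fun t => β₃ * t ^ 3 + β₂ * t ^ 2 + β₁ * t + β₀)
    (h0 : u 0 = u₀) (h1 : u t₁ = u₁)
    (hκ : κ = (u₁ - u₀) / t₁) (hκpos : 0 < κ)
    (hd0 : deriv u 0 = u₀')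
    (hinfl : deriv (deriv u) t₁ = 0)
    (hlo : 0 ≤ u₀') (hhi : u₀' < κ) :
    (∀ t ∈ Set.Ioo 0 t₁, 0 < deriv (deriv u) t) ∧ 0 < deriv u t₁ :=
  stmt_9_general β₀ β₁ β₂ β₃ t₁ u₀ u₁ u₀' κ ht₁ u hu h0 h1 hκ hκpos hd0 hinfl hhi
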